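/- arXiv:1609.05307 — 5 statements merged into one kernel-verified Lean document; each statement's English description precedes it below -/
import Mathlib

section
/- Let m ∈ ℕ and let a, b, c, d ∈ ℝ^m be the coefficient vectors of third-order path constraints at a fixed path position, and let ṡ > 0 be a fixed path velocity. Suppose there is an index k such that a_k = 0 and b_k < 0, and suppose s̈* ∈ ℝ satisfies b_k ṡ s̈* + c_k ṡ³ + d_k = 0 and s̈* ∈ F(ṡ) (i.e., there exists s⃛ ∈ ℝ with a_i s⃛ + b_i ṡ s̈* + c_i ṡ³ + d_i ≤ 0 for all i). Then every s̈ ∈ F(ṡ) satisfies s̈ ≥ s̈*; in particular s̈* is the least element of F(ṡ), i.e., the singular point lies on the Minimum Acceleration Surface (MiAS). -/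
/-- If the `k`-th third-order constraint is singular (`a k = 0`) with `b k < 0`,
and `s̈*` saturates the `k`-th constraint while being a feasible acceleration,
then `s̈*` is the least element of the feasible acceleration set, i.e. the
singular point lies on the Minimum Acceleration Surface. -/
theorem singular_point_on_MiAS
    (m : ℕ) (a b c d : Fin m → ℝ) (sd : ℝ) (hsd : 0 < sd)
    (k : Fin m) (hak : a k = 0) (hbk : b k < 0)
    (sddStar : ℝ)
    (heq : b k * sd * sddStar + c k * sd ^ 3 + d k = 0)
    (hfeas : ∃ sddd : ℝ, ∀ i : Fin m,
      a i * sddd + b i * sd * sddStar + c i * sd ^ 3 + d i ≤ 0) :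
    IsLeast {sdd : ℝ | ∃ sddd : ℝ, ∀ i : Fin m,
      a i * sddd + b i * sd * sdd + c i * sd ^ 3 + d i ≤ 0} sddStar := by
  constructor
  · exact hfeas
  · rintro sdd ⟨sddd, h⟩
    have hk := h k
    rw [hak] at hk
    have h1 : b k * sd * sdd ≤ b k * sd * sddStar := by nlinarith
    have hneg : b k * sd < 0 := mul_neg_of_neg_of_pos hbk hsd
    nlinarith
end

section
/- Let m ∈ ℕ and let a, b, c, d ∈ ℝ^m be the coefficient vectors of third-order path constraints at a fixed path position, and let ṡ > 0. Suppose s̈₀ ∈ F(ṡ) is a maximum of F(ṡ) (that is, s̈₀ ∈ F(ṡ) and every s̈ ∈ F(ṡ) satisfies s̈ ≤ s̈₀), and suppose the point does not lie on any singular curve, in the sense that for every index i with a_i = 0 one has the strict inequality b_i ṡ s̈₀ + c_i ṡ³ + d_i < 0. Then there exists exactly one jerk s⃛ ∈ ℝ such that a_i s⃛ + b_i ṡ s̈₀ + c_i ṡ³ + d_i ≤ 0 for all i. (This is the MaAS case of the statement that the maximum and minimum jerks coincide on the Maximum Acceleration Surface away from singular curves.) -/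
/-- On the Maximum Acceleration Surface, away from singular curves, there is a
unique feasible jerk: if `s̈₀` is the maximum of the feasible acceleration set
and every constraint with `a i = 0` is strictly satisfied at `s̈₀`, then there
is exactly one jerk satisfying all constraints at `s̈₀`. -/
theorem unique_jerk_on_MaAS
    (m : ℕ) (a b c d : Fin m → ℝ) (sd : ℝ) (hsd : 0 < sd)
    (sdd0 : ℝ)
    (hmax : IsGreatest {sdd : ℝ | ∃ sddd : ℝ, ∀ i : Fin m,
      a i * sddd + b i * sd * sdd + c i * sd ^ 3 + d i ≤ 0} sdd0)
    (hns : ∀ i : Fin m, a i = 0 → b i * sd * sdd0 + c i * sd ^ 3 + d i < 0) :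
    ∃! sddd : ℝ, ∀ i : Fin m,
      a i * sddd + b i * sd * sdd0 + c i * sd ^ 3 + d i ≤ 0 := by
  obtain ⟨⟨j0, hj0⟩, hub⟩ := hmax
  have key : ∀ j1 j2 : ℝ, (∀ i, a i * j1 + b i * sd * sdd0 + c i * sd ^ 3 + d i ≤ 0) →
      (∀ i, a i * j2 + b i * sd * sdd0 + c i * sd ^ 3 + d i ≤ 0) → j1 = j2 := by
    intro j1 j2 h1 h2
    by_contra hne
    wlog hlt : j1 < j2 generalizing j1 j2
    · exact this j2 j1 h2 h1 (Ne.symm hne)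
        (lt_of_le_of_ne (not_lt.mp hlt) (Ne.symm hne))
    set j := (j1 + j2) / 2 with hj
    have hstrict : ∀ i, a i * j + b i * sd * sdd0 + c i * sd ^ 3 + d i < 0 := by
      intro i
      rcases lt_trichotomy (a i) 0 with h | h | h
      · have : a i * j < a i * j1 := by nlinarith
        linarith [h1 i]
      · have := hns i h
        rw [h]; linarith
      · have : a i * j < a i * j2 := by nlinarith
        linarith [h2 i]
    have hev : ∀ᶠ x in nhds sdd0, ∀ i, a i * j + b i * sd * x + c i * sd ^ 3 + d i ≤ 0 := by
      rw [Filter.eventually_all]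
      intro i
      have hc : ContinuousAt (fun x : ℝ => a i * j + b i * sd * x + c i * sd ^ 3 + d i) sdd0 := by
        fun_prop
      have := hc.eventually_lt continuousAt_const (hstrict i)
      exact this.mono fun x hx => hx.le
    have hev2 : ∀ᶠ x in nhdsWithin sdd0 (Set.Ioi sdd0),
        ∀ i, a i * j + b i * sd * x + c i * sd ^ 3 + d i ≤ 0 :=
      hev.filter_mono nhdsWithin_le_nhds
    obtain ⟨x, hx, hxI⟩ := (hev2.and self_mem_nhdsWithin).exists
    have : x ≤ sdd0 := hub ⟨j, hx⟩
    linarith [hxI]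
  exact ⟨j0, hj0, fun y hy => key y j0 hy hj0⟩
end

section
/- Let m ∈ ℕ and let a, b, c, d ∈ ℝ^m be the coefficient vectors of third-order path constraints at a fixed path position, and let ṡ > 0. Suppose s̈₀ ∈ F(ṡ) is a minimum of F(ṡ) (that is, s̈₀ ∈ F(ṡ) and every s̈ ∈ F(ṡ) satisfies s̈ ≥ s̈₀), and suppose that for every index i with a_i = 0 one has the strict inequality b_i ṡ s̈₀ + c_i ṡ³ + d_i < 0. Then there exists exactly one jerk s⃛ ∈ ℝ such that a_i s⃛ + b_i ṡ s̈₀ + c_i ṡ³ + d_i ≤ 0 for all i. (This is the MiAS case of the statement that the maximum and minimum jerks coincide on the Minimum Acceleration Surface away from singular curves.) -/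
/-- On the Minimum Acceleration Surface, away from singular curves, there is a
unique feasible jerk: if `s̈₀` is the minimum of the feasible acceleration set
and every constraint with `a i = 0` is strictly satisfied at `s̈₀`, then there
is exactly one jerk satisfying all constraints at `s̈₀`. -/
theorem unique_jerk_on_MiAS
    (m : ℕ) (a b c d : Fin m → ℝ) (sd : ℝ) (hsd : 0 < sd)
    (sdd0 : ℝ)
    (hmin : IsLeast {sdd : ℝ | ∃ sddd : ℝ, ∀ i : Fin m,
      a i * sddd + b i * sd * sdd + c i * sd ^ 3 + d i ≤ 0} sdd0)
    (hns : ∀ i : Fin m, a i = 0 → b i * sd * sdd0 + c i * sd ^ 3 + d i < 0) :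
    ∃! sddd : ℝ, ∀ i : Fin m,
      a i * sddd + b i * sd * sdd0 + c i * sd ^ 3 + d i ≤ 0 := by
  -- handle m = 0 : the feasible set is all of ℝ, contradicting minimality
  rcases Nat.eq_zero_or_pos m with hm | hm
  · exfalso
    have h1 : (sdd0 - 1) ∈ {sdd : ℝ | ∃ sddd : ℝ, ∀ i : Fin m,
        a i * sddd + b i * sd * sdd + c i * sd ^ 3 + d i ≤ 0} := by
      refine ⟨0, fun i => ?_⟩
      subst hm; exact i.elim0
    have := hmin.2 h1
    linarith
  have : NeZero m := ⟨by omega⟩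
  obtain ⟨j0, hj0⟩ := hmin.1
  refine ⟨j0, hj0, fun j hj => ?_⟩
  by_contra hne
  -- midpoint jerk is strictly feasible in every constraint
  set jm : ℝ := (j + j0) / 2 with hjm
  have hstrict : ∀ i : Fin m, a i * jm + b i * sd * sdd0 + c i * sd ^ 3 + d i < 0 := by
    intro i
    rcases eq_or_ne (a i) 0 with h0 | h0
    · have := hns i h0
      rw [h0]; linarith
    · have h1 := hj i
      have h2 := hj0 i
      rcases lt_trichotomy (a i * j) (a i * j0) with h | h | h
      · have : a i * jm = (a i * j + a i * j0) / 2 := by rw [hjm]; ring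
        linarith
      · exfalso; exact hne (mul_left_cancel₀ h0 h)
      · have : a i * jm = (a i * j + a i * j0) / 2 := by rw [hjm]; ring
        linarith
  -- choose a small ε > 0
  set f : Fin m → ℝ := fun i => a i * jm + b i * sd * sdd0 + c i * sd ^ 3 + d i with hf
  have hne' : (Finset.univ : Finset (Fin m)).Nonempty := Finset.univ_nonempty
  set ε : ℝ := Finset.univ.inf' hne' (fun i => (-(f i)) / (|b i| * sd + 1)) with hε
  have hden : ∀ i : Fin m, 0 < |b i| * sd + 1 := fun i => by positivity
  have hεpos : 0 < ε := by
    rw [hε, Finset.lt_inf'_iff]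
    intro i _
    exact div_pos (by simpa [hf] using neg_pos.mpr (hstrict i)) (hden i)
  have hfeas : (sdd0 - ε) ∈ {sdd : ℝ | ∃ sddd : ℝ, ∀ i : Fin m,
      a i * sddd + b i * sd * sdd + c i * sd ^ 3 + d i ≤ 0} := by
    refine ⟨jm, fun i => ?_⟩
    have hle : ε ≤ (-(f i)) / (|b i| * sd + 1) :=
      Finset.inf'_le _ (Finset.mem_univ i)
    have h2 : ε * (|b i| * sd + 1) ≤ -(f i) :=
      (le_div_iff₀ (hden i)).mp hle
    have h3 : -(b i * sd * ε) ≤ |b i| * sd * ε := by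
      have : |b i * sd * ε| = |b i| * sd * ε := by
        rw [abs_mul, abs_mul, abs_of_pos hsd, abs_of_pos hεpos]
      linarith [neg_abs_le (b i * sd * ε), this.le]
    have : a i * jm + b i * sd * (sdd0 - ε) + c i * sd ^ 3 + d i
        = f i - b i * sd * ε := by rw [hf]; ring
    rw [this]
    nlinarith [hεpos]
  have := hmin.2 hfeas
  linarith
end

section
/- Let m ∈ ℕ and let a, b, c, d ∈ ℝ^m be the coefficient vectors of third-order path constraints at a fixed path position. Suppose there is an index k with a_k = 0 and b_k ≠ 0. Define the singular curve C ⊆ ℝ² by C := { (ṡ, s̈) ∈ ℝ² : ṡ > 0, b_k ṡ s̈ + c_k ṡ³ + d_k = 0, and there exists s⃛ ∈ ℝ with a_i s⃛ + b_i ṡ s̈ + c_i ṡ³ + d_i ≤ 0 for all i }. Then C is a preconnected subset of ℝ² (in particular, if C is nonempty it is connected). -/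
/-- The singular curve triggered by a constraint `k` with `a k = 0`, `b k ≠ 0`
is a (pre)connected subset of the `(ṡ, s̈)` plane. -/
theorem singular_curve_isPreconnected
    (m : ℕ) (a b c d : Fin m → ℝ)
    (k : Fin m) (hak : a k = 0) (hbk : b k ≠ 0) :
    IsPreconnected {p : ℝ × ℝ | 0 < p.1 ∧
      b k * p.1 * p.2 + c k * p.1 ^ 3 + d k = 0 ∧
      ∃ sddd : ℝ, ∀ i : Fin m,
        a i * sddd + b i * p.1 * p.2 + c i * p.1 ^ 3 + d i ≤ 0} := by
  set g : ℝ → ℝ := fun v => -(c k * v ^ 3 + d k) / (b k * v) with hg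
  set A : Fin m → ℝ := fun i => c i - b i * c k / b k with hA
  set B : Fin m → ℝ := fun i => d i - b i * d k / b k with hB
  have key : ∀ (i : Fin m) (v : ℝ), 0 < v →
      b i * v * g v + c i * v ^ 3 + d i = A i * v ^ 3 + B i := by
    intro i v hv
    have hv' : v ≠ 0 := hv.ne'
    rw [hg, hA, hB]
    field_simp
    ring
  set S : Set ℝ := {v | 0 < v ∧ ∃ t : ℝ, ∀ i, a i * t + A i * v ^ 3 + B i ≤ 0}
    with hS
  have hSpre : IsPreconnected S := by
    rw [isPreconnected_iff_ordConnected]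
    constructor
    intro x hx y hy z hz
    obtain ⟨hx0, t1, ht1⟩ := hx
    obtain ⟨hy0, t2, ht2⟩ := hy
    have hz0 : 0 < z := lt_of_lt_of_le hx0 hz.1
    have hxy3 : x ^ 3 ≤ y ^ 3 :=
      pow_le_pow_left₀ hx0.le (hz.1.trans hz.2) 3
    have hcube : z ^ 3 ∈ Set.Icc (x ^ 3) (y ^ 3) :=
      ⟨pow_le_pow_left₀ hx0.le hz.1 3, pow_le_pow_left₀ hz0.le hz.2 3⟩
    rw [← segment_eq_Icc hxy3] at hcube
    obtain ⟨l, mu, hl, hmu, hlm, hzc⟩ := hcube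
    simp only [smul_eq_mul] at hzc
    refine ⟨hz0, l * t1 + mu * t2, fun i => ?_⟩
    have h1 := ht1 i
    have h2 := ht2 i
    have key2 : a i * (l * t1 + mu * t2) + A i * z ^ 3 + B i
        = l * (a i * t1 + A i * x ^ 3 + B i)
          + mu * (a i * t2 + A i * y ^ 3 + B i) := by
      linear_combination (-(A i)) * hzc + (-(B i)) * hlm
    rw [key2]
    have hm1 : l * (a i * t1 + A i * x ^ 3 + B i) ≤ 0 :=
      mul_nonpos_of_nonneg_of_nonpos hl h1
    have hm2 : mu * (a i * t2 + A i * y ^ 3 + B i) ≤ 0 :=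
      mul_nonpos_of_nonneg_of_nonpos hmu h2
    linarith
  have himg : {p : ℝ × ℝ | 0 < p.1 ∧
      b k * p.1 * p.2 + c k * p.1 ^ 3 + d k = 0 ∧
      ∃ sddd : ℝ, ∀ i : Fin m,
        a i * sddd + b i * p.1 * p.2 + c i * p.1 ^ 3 + d i ≤ 0}
      = (fun v => (v, g v)) '' S := by
    ext p
    constructor
    · rintro ⟨hp1, heq, t, ht⟩
      have hbv : b k * p.1 ≠ 0 := mul_ne_zero hbk hp1.ne'
      have hp2 : p.2 = g p.1 := by
        rw [hg]
        field_simp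
        linarith [heq]
      refine ⟨p.1, ⟨hp1, t, fun i => ?_⟩, ?_⟩
      · have hk := key i p.1 hp1
        rw [← hp2] at hk
        linarith [ht i]
      · simp only
        rw [← hp2]
    · rintro ⟨v, ⟨hv0, t, ht⟩, rfl⟩
      refine ⟨hv0, ?_, t, fun i => ?_⟩
      · show b k * v * g v + c k * v ^ 3 + d k = 0
        rw [key k v hv0, hA, hB]
        field_simp
        ring
      · show a i * t + b i * v * g v + c i * v ^ 3 + d i ≤ 0
        have := key i v hv0
        linarith [ht i]
  rw [himg]
  refine hSpre.image _ ?_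
  apply ContinuousOn.prodMk continuousOn_id
  apply ContinuousOn.div
  · exact (continuous_const.mul (continuous_pow 3)).add continuous_const
      |>.neg.continuousOn
  · exact (continuous_const.mul continuous_id).continuousOn
  · intro v hv
    exact mul_ne_zero hbk hv.1.ne'
end

section
/- Let a, b, c, d : ℝ → ℝ be differentiable functions (the coefficient functions of the k-th third-order constraint along the path), and let s : ℝ → ℝ be four times differentiable at t₀ ∈ ℝ and at least three times differentiable on a neighborhood U of t₀. Suppose the constraint is saturated identically on U, i.e., for all t ∈ U: a(s(t)) s⃛(t) + b(s(t)) ṡ(t) s̈(t) + c(s(t)) ṡ(t)³ + d(s(t)) = 0, where ṡ, s̈, s⃛ denote the first, second and third derivatives of s. Write s* := s(t₀), ṡ := ṡ(t₀), s̈ := s̈(t₀). Assume a(s*) = 0, ṡ > 0, and a'(s*) + b(s*) ≠ 0. Then the jerk at t₀ is given by the singular-jerk formula: s⃛(t₀) = −( d'(s*) + c'(s*) ṡ³ + 3 c(s*) ṡ s̈ + b'(s*) ṡ s̈ + b(s*) s̈²/ṡ ) / ( a'(s*) + b(s*) ). -/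
/-- The singular-jerk formula: if the `k`-th constraint is saturated identically
on a neighborhood `U` of `t₀`, the path parameter `s` is three times
differentiable on `U` and four times differentiable at `t₀`, the coefficient
functions are differentiable, and at `s* = s t₀` we have `a s* = 0`, `ṡ > 0`
and `a' s* + b s* ≠ 0`, then the jerk at `t₀` equals
`−(d' + c' ṡ³ + 3 c ṡ s̈ + b' ṡ s̈ + b s̈²/ṡ) / (a' + b)` evaluated at `s*`. -/
theorem singular_jerk_formula
    (a b c d : ℝ → ℝ)
    (ha : Differentiable ℝ a) (hb : Differentiable ℝ b)
    (hc : Differentiable ℝ c) (hd : Differentiable ℝ d)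
    (s s1 s2 s3 : ℝ → ℝ) (s4 : ℝ) (t₀ : ℝ) (U : Set ℝ)
    (hU : U ∈ nhds t₀)
    (hs1 : ∀ t ∈ U, HasDerivAt s (s1 t) t)
    (hs2 : ∀ t ∈ U, HasDerivAt s1 (s2 t) t)
    (hs3 : ∀ t ∈ U, HasDerivAt s2 (s3 t) t)
    (hs4 : HasDerivAt s3 s4 t₀)
    (hsat : ∀ t ∈ U,
      a (s t) * s3 t + b (s t) * s1 t * s2 t + c (s t) * s1 t ^ 3 + d (s t) = 0)
    (ha0 : a (s t₀) = 0) (hsd : 0 < s1 t₀)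
    (hne : deriv a (s t₀) + b (s t₀) ≠ 0) :
    s3 t₀ = -(deriv d (s t₀) + deriv c (s t₀) * s1 t₀ ^ 3
        + 3 * c (s t₀) * s1 t₀ * s2 t₀
        + deriv b (s t₀) * s1 t₀ * s2 t₀
        + b (s t₀) * s2 t₀ ^ 2 / s1 t₀)
      / (deriv a (s t₀) + b (s t₀)) := by
  have ht₀ : t₀ ∈ U := mem_of_mem_nhds hU
  have hS1 := hs1 t₀ ht₀
  have hS2 := hs2 t₀ ht₀
  have hS3 := hs3 t₀ ht₀
  have hA : HasDerivAt (fun t => a (s t)) (deriv a (s t₀) * s1 t₀) t₀ :=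
    (ha (s t₀)).hasDerivAt.comp t₀ hS1
  have hB : HasDerivAt (fun t => b (s t)) (deriv b (s t₀) * s1 t₀) t₀ :=
    (hb (s t₀)).hasDerivAt.comp t₀ hS1
  have hC : HasDerivAt (fun t => c (s t)) (deriv c (s t₀) * s1 t₀) t₀ :=
    (hc (s t₀)).hasDerivAt.comp t₀ hS1
  have hD : HasDerivAt (fun t => d (s t)) (deriv d (s t₀) * s1 t₀) t₀ :=
    (hd (s t₀)).hasDerivAt.comp t₀ hS1
  have hFd := (((hA.mul hs4).add ((hB.mul hS2).mul hS3)).add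
      (hC.mul (hS2.pow 3))).add hD
  have hF0 : HasDerivAt (fun t =>
      a (s t) * s3 t + b (s t) * s1 t * s2 t + c (s t) * s1 t ^ 3 + d (s t))
      0 t₀ := by
    have : (fun t => a (s t) * s3 t + b (s t) * s1 t * s2 t
        + c (s t) * s1 t ^ 3 + d (s t)) =ᶠ[nhds t₀] fun _ => (0 : ℝ) := by
      filter_upwards [hU] with t ht using hsat t ht
    exact (hasDerivAt_const t₀ (0 : ℝ)).congr_of_eventuallyEq this
  have hD0 := hFd.unique hF0
  rw [ha0] at hD0
  have hs1ne : s1 t₀ ≠ 0 := ne_of_gt hsd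
  norm_num at hD0
  rw [eq_div_iff hne]
  apply mul_right_cancel₀ hs1ne
  field_simp
  linear_combination hD0
end
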